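/- Let D ∈ ℕ, K > 0, 0 < τ_lo ≤ τ_hi, and let p₀ be a probability density on ℝ^D supported on [−1,1]^D with p₀(x) ≤ K for all x ∈ [−1,1]^D; let α, μ_t, σ_t, p_t be as in the forward process. Then for every multi-index k ∈ (ℤ_{≥0})^D there exists a constant C > 0 depending only on (D, K, k, τ_hi, τ_lo) such that |(D^k p_t)(x)| ≤ C / σ_t^{|k|} for every x ∈ ℝ^D and every t > 0, where D^k denotes the mixed partial derivative in x of order k and |k| is the sum of the entries of k. -/

import Mathlib

open MeasureTheory
open scoped BigOperators ENNReal NNReal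

noncomputable section

namespace DMpaper

attribute [local instance] Classical.propDecidable

/-- The cube `[-1,1]^D`. -/
def cube (D : ℕ) : Set (Fin D → ℝ) := Set.Icc (-1) 1

/-- Density of the Gaussian `N(0, σ² I_D)` on `ℝ^D`. -/
def gaussD (D : ℕ) (σ : ℝ) (x : Fin D → ℝ) : ℝ :=
  (2 * Real.pi * σ ^ 2) ^ (-(D : ℝ) / 2) * Real.exp (-(∑ i, x i ^ 2) / (2 * σ ^ 2))

/-- `μ_t = exp (-∫_0^t α_s ds)` for the forward process. -/
def muT (α : ℝ → ℝ) (t : ℝ) : ℝ := Real.exp (-∫ s in Set.Ioc (0 : ℝ) t, α s)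

/-- `σ_t = √(1 - μ_t²)` for the forward process. -/
def sigmaT (α : ℝ → ℝ) (t : ℝ) : ℝ := Real.sqrt (1 - muT α t ^ 2)

/-- The marginal density `p_t(x) = ∫_{[-1,1]^D} p₀(y) φ_{σ_t}(x - μ_t y) dy`
of the forward process. -/
def fwdDen (D : ℕ) (α : ℝ → ℝ) (p₀ : (Fin D → ℝ) → ℝ) (t : ℝ) (x : Fin D → ℝ) : ℝ :=
  ∫ y in cube D, p₀ y * gaussD D (sigmaT α t) (x - muT α t • y)

/-- `p₀` is a probability density supported on `[-1,1]^D`, and `α` is Borel measurable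
with values in `[τlo, τhi]` on `[0,∞)`. -/
def ForwardHyp (D : ℕ) (τlo τhi : ℝ) (α : ℝ → ℝ) (p₀ : (Fin D → ℝ) → ℝ) : Prop :=
  Measurable p₀ ∧ (∀ x, 0 ≤ p₀ x) ∧ (∀ x, x ∉ cube D → p₀ x = 0) ∧ (∫ x, p₀ x) = 1 ∧
    Measurable α ∧ ∀ t, 0 ≤ t → τlo ≤ α t ∧ α t ≤ τhi

/-- Partial derivative in the `i`-th coordinate. -/
def pderivG (D : ℕ) (i : Fin D) (f : (Fin D → ℝ) → ℝ) : (Fin D → ℝ) → ℝ :=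
  fun x => deriv (fun s : ℝ => f (Function.update x i s)) (x i)

/-- Mixed partial derivative for a multi-index `γ`. -/
def mderivG (D : ℕ) (γ : Fin D → ℕ) (f : (Fin D → ℝ) → ℝ) : (Fin D → ℝ) → ℝ :=
  (List.finRange D).foldr (fun i g => (pderivG D i)^[γ i] g) f

/-! The Gaussian density factors over coordinates, `φ_σ(z) = (2πσ²)^(-D/2) ∏ⱼ g(zⱼ/σ)` with
`g(u) = exp(-u²/2)`, so differentiating under the integral sign gives
`D^k p_t(x) = (2πσ²)^(-D/2) ∫ p₀(y) ∏ⱼ ∂^{kⱼ}[g(·/σ)](xⱼ - μ yⱼ) dy`, where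
`∂ⁿ[g(·/σ)] = σ⁻ⁿ g⁽ⁿ⁾(·/σ)` and `g⁽ⁿ⁾` is a Hermite polynomial times `g`, hence bounded and
integrable. As `μ² + σ² = 1`, one of `σ`, `μ` is at least `1/2`. If `σ ≥ 1/2`, bound the kernel by
its supremum `σ^(-|k|) ∏ⱼ ‖g⁽ᵏʲ⁾‖_∞` and use `∫ p₀ = 1`; the prefactor is at most
`σ^(-D) ≤ 2^D`. If `μ ≥ 1/2`, bound `p₀ ≤ K` and integrate the kernel over all of `ℝ^D`:
the substitution `y ↦ x - μ y` costs `μ^(-D) ≤ 2^D`, and the `L¹` norm `σ^(D-|k|) ∏ⱼ ‖g⁽ᵏʲ⁾‖₁`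
cancels the prefactor up to `σ^(-|k|)`. -/

open scoped ContDiff Nat

lemma abs_pow_le_factorial_mul_exp_sq (n : ℕ) (v : ℝ) :
    |v| ^ n ≤ n ! * Real.exp 1 * Real.exp (v ^ 2 / 4) := by
  have h_exp : |v| ^ n ≤ n ! * Real.exp |v| := by
    have := Real.pow_div_factorial_le_exp _ (abs_nonneg v) n
    rwa [div_le_iff₀ (by positivity), mul_comm] at this
  have h_sq : |v| ≤ 1 + v ^ 2 / 4 := by nlinarith [sq_abs v, sq_nonneg (|v| - 2)]
  calc |v| ^ n ≤ n ! * Real.exp |v| := h_exp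
    _ ≤ n ! * Real.exp (1 + v ^ 2 / 4) := by gcongr
    _ = n ! * Real.exp 1 * Real.exp (v ^ 2 / 4) := by rw [Real.exp_add, mul_assoc]

open Polynomial in
lemma exists_abs_aeval_le_mul_exp_sq (p : ℤ[X]) :
    ∃ B, ∀ v : ℝ, |aeval v p| ≤ B * Real.exp (v ^ 2 / 4) := by
  induction p using Polynomial.induction_on' with
  | add p q hp hq =>
    obtain ⟨B₁, h₁⟩ := hp
    obtain ⟨B₂, h₂⟩ := hq
    refine ⟨B₁ + B₂, fun v => ?_⟩
    rw [map_add, add_mul]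
    exact (abs_add_le _ _).trans (add_le_add (h₁ v) (h₂ v))
  | monomial n a =>
    refine ⟨|(a : ℝ)| * (n ! * Real.exp 1), fun v => ?_⟩
    rw [aeval_monomial, abs_mul, abs_pow, mul_assoc, algebraMap_int_eq, eq_intCast]
    gcongr
    exact abs_pow_le_factorial_mul_exp_sq n v

def gaussKernel (u : ℝ) : ℝ := Real.exp (-(u ^ 2 / 2))

lemma contDiff_gaussKernel : ContDiff ℝ ∞ gaussKernel := by
  unfold gaussKernel
  fun_prop

open Polynomial in
lemma iteratedDeriv_gaussKernel (n : ℕ) (v : ℝ) :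
    iteratedDeriv n gaussKernel v = (-1) ^ n * aeval v (hermite n) * Real.exp (-(v ^ 2 / 2)) := by
  rw [iteratedDeriv_eq_iterate]
  exact deriv_gaussian_eq_hermite_mul_gaussian n v

open Polynomial in
lemma exists_abs_iteratedDeriv_gaussKernel_le_mul_exp (n : ℕ) :
    ∃ B, 0 < B ∧ ∀ v, |iteratedDeriv n gaussKernel v| ≤ B * Real.exp (-(v ^ 2 / 4)) := by
  obtain ⟨B, hB⟩ := exists_abs_aeval_le_mul_exp_sq (hermite n)
  refine ⟨max B 1, by positivity, fun v => ?_⟩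
  rw [iteratedDeriv_gaussKernel, abs_mul, abs_mul, abs_pow, abs_neg, abs_one, one_pow, one_mul,
    Real.abs_exp]
  calc |aeval v (hermite n)| * Real.exp (-(v ^ 2 / 2))
      ≤ B * Real.exp (v ^ 2 / 4) * Real.exp (-(v ^ 2 / 2)) := by gcongr; exact hB v
    _ = B * Real.exp (-(v ^ 2 / 4)) := by rw [mul_assoc, ← Real.exp_add]; ring_nf
    _ ≤ max B 1 * Real.exp (-(v ^ 2 / 4)) := by gcongr; exact le_max_left B 1

lemma exists_abs_iteratedDeriv_gaussKernel_le (n : ℕ) :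
    ∃ B, 0 < B ∧ ∀ v, |iteratedDeriv n gaussKernel v| ≤ B := by
  obtain ⟨B, hB_pos, hB⟩ := exists_abs_iteratedDeriv_gaussKernel_le_mul_exp n
  refine ⟨B, hB_pos, fun v => (hB v).trans ?_⟩
  exact mul_le_of_le_one_right hB_pos.le (Real.exp_le_one_iff.2 (by nlinarith [sq_nonneg v]))

lemma integrable_iteratedDeriv_gaussKernel (n : ℕ) :
    Integrable (iteratedDeriv n gaussKernel) := by
  obtain ⟨B, -, hB⟩ := exists_abs_iteratedDeriv_gaussKernel_le_mul_exp n
  have h_gauss : Integrable fun v : ℝ => Real.exp (-(v ^ 2 / 4)) := by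
    simpa [div_eq_inv_mul] using integrable_exp_neg_mul_sq (b := (4 : ℝ)⁻¹) (by norm_num)
  refine (h_gauss.const_mul B).mono'
    (contDiff_gaussKernel.continuous_iteratedDeriv n (mod_cast le_top)).aestronglyMeasurable ?_
  exact Filter.Eventually.of_forall fun v => hB v

section Dilation

variable {f : ℝ → ℝ}

lemma iteratedDeriv_comp_inv_mul (hf : ContDiff ℝ ∞ f) (σ : ℝ) (n : ℕ) (s : ℝ) :
    iteratedDeriv n (fun s => f (σ⁻¹ * s)) s = σ⁻¹ ^ n * iteratedDeriv n f (σ⁻¹ * s) :=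
  congrFun (iteratedDeriv_comp_const_mul (hf.of_le (mod_cast le_top)) σ⁻¹) s

lemma abs_iteratedDeriv_comp_inv_mul (hf : ContDiff ℝ ∞ f) {σ : ℝ} (hσ : 0 < σ) (n : ℕ)
    (s : ℝ) :
    |iteratedDeriv n (fun s => f (σ⁻¹ * s)) s| = σ⁻¹ ^ n * |iteratedDeriv n f (σ⁻¹ * s)| := by
  rw [iteratedDeriv_comp_inv_mul hf, abs_mul, abs_pow, abs_inv, abs_of_pos hσ]

lemma abs_iteratedDeriv_comp_inv_mul_le (hf : ContDiff ℝ ∞ f) {σ : ℝ} (hσ : 0 < σ) {n : ℕ}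
    {C : ℝ} (hC : ∀ s, |iteratedDeriv n f s| ≤ C) (s : ℝ) :
    |iteratedDeriv n (fun s => f (σ⁻¹ * s)) s| ≤ σ⁻¹ ^ n * C := by
  rw [abs_iteratedDeriv_comp_inv_mul hf hσ]
  gcongr
  exact hC _

lemma integral_abs_iteratedDeriv_comp_inv_mul (hf : ContDiff ℝ ∞ f) {σ : ℝ} (hσ : 0 < σ)
    (n : ℕ) :
    ∫ s, |iteratedDeriv n (fun s => f (σ⁻¹ * s)) s|
      = σ⁻¹ ^ n * σ * ∫ s, |iteratedDeriv n f s| := by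
  simp_rw [abs_iteratedDeriv_comp_inv_mul hf hσ]
  rw [integral_const_mul, Measure.integral_comp_inv_mul_left (fun v => |iteratedDeriv n f v|),
    abs_of_pos hσ, smul_eq_mul, mul_assoc]

lemma integrable_iteratedDeriv_comp_inv_mul (hf : ContDiff ℝ ∞ f) {σ : ℝ} (hσ : 0 < σ) (n : ℕ)
    (hf_int : Integrable (iteratedDeriv n f)) :
    Integrable (iteratedDeriv n (fun s => f (σ⁻¹ * s))) := by
  simp_rw [funext (iteratedDeriv_comp_inv_mul hf σ n)]
  exact (hf_int.comp_mul_left' (inv_ne_zero hσ.ne')).const_mul _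

end Dilation

lemma integral_comp_sub_smul {D : ℕ} (g : (Fin D → ℝ) → ℝ) (x : Fin D → ℝ) {c : ℝ} (hc : 0 < c) :
    ∫ y, g (x - c • y) = c⁻¹ ^ D * ∫ z, g z := by
  rw [Measure.integral_comp_smul (μ := volume) (fun u => g (x - u)), integral_sub_left_eq_self,
    Module.finrank_fin_fun, smul_eq_mul, inv_pow, abs_of_pos (by positivity)]

section ProductKernel

variable {D : ℕ} {f : ℝ → ℝ}

def prodIteratedDeriv (f : ℝ → ℝ) (m : Fin D → ℕ) (z : Fin D → ℝ) : ℝ :=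
  ∏ j, iteratedDeriv (m j) f (z j)

lemma continuous_prodIteratedDeriv (hf : ContDiff ℝ ∞ f) (m : Fin D → ℕ) :
    Continuous (prodIteratedDeriv f m) :=
  continuous_finsetProd _ fun j _ =>
    (hf.continuous_iteratedDeriv (m j) (mod_cast le_top)).comp (continuous_apply j)

lemma abs_prodIteratedDeriv_le {B : ℕ → ℝ} (hB : ∀ n s, |iteratedDeriv n f s| ≤ B n)
    (m : Fin D → ℕ) (z : Fin D → ℝ) :
    |prodIteratedDeriv f m z| ≤ ∏ j, B (m j) := by
  rw [prodIteratedDeriv, Finset.abs_prod]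
  exact Finset.prod_le_prod (fun j _ => abs_nonneg _) fun j _ => hB (m j) (z j)

lemma integrable_abs_prodIteratedDeriv (hf_int : ∀ n, Integrable (iteratedDeriv n f))
    (m : Fin D → ℕ) :
    Integrable fun z => |prodIteratedDeriv f m z| := by
  simp_rw [prodIteratedDeriv, Finset.abs_prod]
  exact Integrable.fintype_prod fun j => (hf_int (m j)).abs

lemma integral_abs_prodIteratedDeriv (m : Fin D → ℕ) :
    ∫ z, |prodIteratedDeriv f m z| = ∏ j, ∫ s, |iteratedDeriv (m j) f s| := by
  simp_rw [prodIteratedDeriv, Finset.abs_prod]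
  exact integral_fintype_prod_volume_eq_prod fun j s => |iteratedDeriv (m j) f s|

lemma prodIteratedDeriv_update_sub (m : Fin D → ℕ) (x y : Fin D → ℝ) (c : ℝ) (i : Fin D)
    (s : ℝ) :
    prodIteratedDeriv f m (Function.update x i s - c • y) = iteratedDeriv (m i) f (s - c * y i) *
      ∏ j ∈ Finset.univ.erase i, iteratedDeriv (m j) f (x j - c * y j) := by
  rw [prodIteratedDeriv, ← Finset.mul_prod_erase _ _ (Finset.mem_univ i)]
  congr 1
  · simp
  · refine Finset.prod_congr rfl fun j hj => ?_
    simp [Function.update_of_ne (Finset.ne_of_mem_erase hj)]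

lemma hasDerivAt_prodIteratedDeriv_update_sub (hf : ContDiff ℝ ∞ f) (m : Fin D → ℕ)
    (x y : Fin D → ℝ) (c : ℝ) (i : Fin D) (s : ℝ) :
    HasDerivAt (fun s => prodIteratedDeriv f m (Function.update x i s - c • y))
      (prodIteratedDeriv f (m + Pi.single i 1) (Function.update x i s - c • y)) s := by
  have h_value : prodIteratedDeriv f (m + Pi.single i 1) (Function.update x i s - c • y) =
      iteratedDeriv (m i + 1) f (s - c * y i) *
        ∏ j ∈ Finset.univ.erase i, iteratedDeriv (m j) f (x j - c * y j) := by
    rw [prodIteratedDeriv_update_sub]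
    congr 1
    · simp
    · refine Finset.prod_congr rfl fun j hj => ?_
      simp [Finset.ne_of_mem_erase hj]
  have h_diff : DifferentiableAt ℝ (iteratedDeriv (m i) f) (s - c * y i) :=
    (hf.differentiable_iteratedDeriv (m i) (mod_cast ENat.natCast_lt_top (m i))).differentiableAt
  simp_rw [h_value, prodIteratedDeriv_update_sub, iteratedDeriv_succ]
  simpa using (h_diff.hasDerivAt.comp s ((hasDerivAt_id s).sub_const (c * y i))).mul_const _

end ProductKernel

section KernelConv

variable {D : ℕ} {ν : Measure (Fin D → ℝ)} {w : (Fin D → ℝ) → ℝ} {f : ℝ → ℝ} {c : ℝ}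

def kernelConv (ν : Measure (Fin D → ℝ)) (w : (Fin D → ℝ) → ℝ) (f : ℝ → ℝ) (c : ℝ)
    (m : Fin D → ℕ) (x : Fin D → ℝ) : ℝ :=
  ∫ y, w y * prodIteratedDeriv f m (x - c • y) ∂ν

lemma integrable_mul_prodIteratedDeriv (hf : ContDiff ℝ ∞ f)
    (hbdd : ∀ n, ∃ C, ∀ s, |iteratedDeriv n f s| ≤ C) (hw : Integrable w ν) (m : Fin D → ℕ)
    (x : Fin D → ℝ) :
    Integrable (fun y => w y * prodIteratedDeriv f m (x - c • y)) ν := by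
  choose B hB using hbdd
  refine hw.mul_bdd (c := ∏ j, B (m j)) (((continuous_prodIteratedDeriv hf m).comp
    (continuous_const.sub (continuous_const_smul c))).aestronglyMeasurable) ?_
  exact ae_of_all _ fun y => abs_prodIteratedDeriv_le hB m _

lemma pderivG_kernelConv (hf : ContDiff ℝ ∞ f) (hbdd : ∀ n, ∃ C, ∀ s, |iteratedDeriv n f s| ≤ C)
    (hw : Integrable w ν) (m : Fin D → ℕ) (i : Fin D) :
    pderivG D i (kernelConv ν w f c m) = kernelConv ν w f c (m + Pi.single i 1) := by
  funext x
  have h_int (m' : Fin D → ℕ) (x' : Fin D → ℝ) :=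
    integrable_mul_prodIteratedDeriv (c := c) hf hbdd hw m' x'
  choose B hB using hbdd
  have h_bound : ∀ᵐ y ∂ν, ∀ s ∈ Set.univ,
      ‖w y * prodIteratedDeriv f (m + Pi.single i 1) (Function.update x i s - c • y)‖
        ≤ |w y| * ∏ j, B ((m + Pi.single i 1 : Fin D → ℕ) j) := by
    refine ae_of_all _ fun y s _ => ?_
    rw [Real.norm_eq_abs, abs_mul]
    exact mul_le_mul_of_nonneg_left (abs_prodIteratedDeriv_le hB _ _) (abs_nonneg _)
  have h_diff : ∀ᵐ y ∂ν, ∀ s ∈ Set.univ,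
      HasDerivAt (fun s => w y * prodIteratedDeriv f m (Function.update x i s - c • y))
        (w y * prodIteratedDeriv f (m + Pi.single i 1) (Function.update x i s - c • y)) s :=
    ae_of_all _ fun y s _ => (hasDerivAt_prodIteratedDeriv_update_sub hf m x y c i s).const_mul _
  have h_deriv := (hasDerivAt_integral_of_dominated_loc_of_deriv_le (𝕜 := ℝ) (E := ℝ) (μ := ν)
    (x₀ := x i) Filter.univ_mem
    (Filter.Eventually.of_forall fun s => (h_int m (Function.update x i s)).aestronglyMeasurable)
    (h_int m _) (h_int _ _).aestronglyMeasurable h_bound (hw.abs.mul_const _) h_diff).2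
  rw [Function.update_eq_self] at h_deriv
  exact h_deriv.deriv

lemma iterate_pderivG_kernelConv (hf : ContDiff ℝ ∞ f)
    (hbdd : ∀ n, ∃ C, ∀ s, |iteratedDeriv n f s| ≤ C) (hw : Integrable w ν) (i : Fin D) (n : ℕ)
    (m : Fin D → ℕ) :
    (pderivG D i)^[n] (kernelConv ν w f c m) = kernelConv ν w f c (m + Pi.single i n) := by
  induction n with
  | zero => simp
  | succ n ih =>
    rw [Function.iterate_succ_apply', ih, pderivG_kernelConv hf hbdd hw, add_assoc,
      ← Pi.single_add]

lemma mderivG_kernelConv (hf : ContDiff ℝ ∞ f)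
    (hbdd : ∀ n, ∃ C, ∀ s, |iteratedDeriv n f s| ≤ C) (hw : Integrable w ν) (k : Fin D → ℕ) :
    mderivG D k (kernelConv ν w f c 0) = kernelConv ν w f c k := by
  have h_foldr : ∀ (l : List (Fin D)) (m : Fin D → ℕ),
      l.foldr (fun i g => (pderivG D i)^[k i] g) (kernelConv ν w f c m)
        = kernelConv ν w f c (m + fun j => l.count j * k j) := by
    intro l m
    induction l with
    | nil =>
      simp only [List.foldr_nil, List.count_nil, zero_mul]
      rfl
    | cons i l ih =>
      rw [List.foldr_cons, ih, iterate_pderivG_kernelConv hf hbdd hw, add_assoc]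
      congr 2
      funext j
      by_cases h : j = i
      · subst h; simp [add_mul, add_comm]
      · simp [h, Ne.symm h]
  rw [mderivG, h_foldr, zero_add]
  congr 1
  funext j
  simp [List.count_eq_one_of_mem (List.nodup_finRange D) (List.mem_finRange j)]

end KernelConv

section KernelConvBounds

variable {D : ℕ} {ν : Measure (Fin D → ℝ)} {w : (Fin D → ℝ) → ℝ} {f : ℝ → ℝ} {c : ℝ}

lemma abs_kernelConv_le_of_abs_le (hw_nonneg : ∀ y, 0 ≤ w y) (hw : Integrable w ν)
    {m : Fin D → ℕ} {M : ℝ} (hM : ∀ z, |prodIteratedDeriv f m z| ≤ M) (x : Fin D → ℝ) :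
    |kernelConv ν w f c m x| ≤ M * ∫ y, w y ∂ν := by
  rw [kernelConv, ← Real.norm_eq_abs, ← integral_const_mul]
  refine norm_integral_le_of_norm_le (hw.const_mul M) (ae_of_all _ fun y => ?_)
  rw [Real.norm_eq_abs, abs_mul, abs_of_nonneg (hw_nonneg y), mul_comm]
  exact mul_le_mul_of_nonneg_right (hM _) (hw_nonneg y)

lemma abs_kernelConv_volume_le (hf_int : ∀ n, Integrable (iteratedDeriv n f)) {K : ℝ}
    (hwK : ∀ y, |w y| ≤ K) (hc : 0 < c) (m : Fin D → ℕ) (x : Fin D → ℝ) :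
    |kernelConv volume w f c m x| ≤ K * (c⁻¹ ^ D * ∏ j, ∫ s, |iteratedDeriv (m j) f s|) := by
  have h_int : Integrable fun y => |prodIteratedDeriv f m (x - c • y)| :=
    ((integrable_abs_prodIteratedDeriv hf_int m).comp_sub_left x).comp_smul hc.ne'
  calc |kernelConv volume w f c m x| ≤ ∫ y, K * |prodIteratedDeriv f m (x - c • y)| := by
        rw [kernelConv, ← Real.norm_eq_abs]
        refine norm_integral_le_of_norm_le (h_int.const_mul K) (ae_of_all _ fun y => ?_)
        rw [Real.norm_eq_abs, abs_mul]
        exact mul_le_mul_of_nonneg_right (hwK y) (abs_nonneg _)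
    _ = K * (c⁻¹ ^ D * ∏ j, ∫ s, |iteratedDeriv (m j) f s|) := by
        rw [integral_const_mul, integral_comp_sub_smul (fun z => |prodIteratedDeriv f m z|) x hc,
          integral_abs_prodIteratedDeriv]

end KernelConvBounds

lemma pderivG_const_mul (D : ℕ) (i : Fin D) (a : ℝ) (g : (Fin D → ℝ) → ℝ) :
    pderivG D i (fun x => a * g x) = fun x => a * pderivG D i g x :=
  funext fun _ => deriv_const_mul_field a

lemma mderivG_const_mul (D : ℕ) (k : Fin D → ℕ) (a : ℝ) (g : (Fin D → ℝ) → ℝ) :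
    mderivG D k (fun x => a * g x) = fun x => a * mderivG D k g x := by
  have h_iterate (i : Fin D) (n : ℕ) : ∀ g : (Fin D → ℝ) → ℝ,
      (pderivG D i)^[n] (fun x => a * g x) = fun x => a * (pderivG D i)^[n] g x := by
    induction n with
    | zero => exact fun _ => rfl
    | succ n ih =>
      intro g
      rw [Function.iterate_succ_apply, pderivG_const_mul, ih, Function.iterate_succ_apply]
  rw [mderivG, mderivG]
  induction List.finRange D with
  | nil => rfl
  | cons i l ih => rw [List.foldr_cons, List.foldr_cons, ih, h_iterate]

lemma contDiff_gaussKernel_comp_mul (σ : ℝ) : ContDiff ℝ ∞ fun s => gaussKernel (σ⁻¹ * s) :=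
  contDiff_gaussKernel.comp (contDiff_const.mul contDiff_id)

section Gaussian

variable {D : ℕ} {σ : ℝ}

lemma abs_prodIteratedDeriv_gaussKernel_le {B : ℕ → ℝ}
    (hB : ∀ n v, |iteratedDeriv n gaussKernel v| ≤ B n) (hσ : 0 < σ) (m : Fin D → ℕ)
    (z : Fin D → ℝ) :
    |prodIteratedDeriv (fun s => gaussKernel (σ⁻¹ * s)) m z| ≤ σ⁻¹ ^ (∑ j, m j) * ∏ j, B (m j) := by
  rw [← Finset.prod_pow_eq_pow_sum, ← Finset.prod_mul_distrib]
  exact abs_prodIteratedDeriv_le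
    (fun n => abs_iteratedDeriv_comp_inv_mul_le contDiff_gaussKernel hσ (hB n)) m z

lemma prod_integral_abs_iteratedDeriv_gaussKernel (hσ : 0 < σ) (m : Fin D → ℕ) :
    ∏ j, ∫ s, |iteratedDeriv (m j) (fun s => gaussKernel (σ⁻¹ * s)) s|
      = σ ^ D * σ⁻¹ ^ (∑ j, m j) * ∏ j, ∫ v, |iteratedDeriv (m j) gaussKernel v| := by
  simp_rw [integral_abs_iteratedDeriv_comp_inv_mul contDiff_gaussKernel hσ,
    Finset.prod_mul_distrib, Finset.prod_pow_eq_pow_sum, Finset.prod_const, Finset.card_univ,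
    Fintype.card_fin]
  ring

lemma gaussD_eq (D : ℕ) (σ : ℝ) (z : Fin D → ℝ) :
    gaussD D σ z = (2 * Real.pi * σ ^ 2) ^ (-(D : ℝ) / 2) *
      prodIteratedDeriv (fun s => gaussKernel (σ⁻¹ * s)) 0 z := by
  simp only [gaussD, prodIteratedDeriv, Pi.zero_apply, iteratedDeriv_zero, gaussKernel,
    ← Real.exp_sum]
  congr 2
  rw [neg_div, Finset.sum_div, ← Finset.sum_neg_distrib]
  refine Finset.sum_congr rfl fun j _ => ?_
  field_simp

lemma two_pi_mul_sq_rpow_le (D : ℕ) (hσ : 0 < σ) :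
    (2 * Real.pi * σ ^ 2) ^ (-(D : ℝ) / 2) ≤ σ⁻¹ ^ D := by
  calc (2 * Real.pi * σ ^ 2) ^ (-(D : ℝ) / 2) ≤ (σ ^ 2) ^ (-(D : ℝ) / 2) :=
        Real.rpow_le_rpow_of_nonpos (by positivity)
          (le_mul_of_one_le_left (by positivity) (by nlinarith [Real.pi_gt_three]))
          (by have := D.cast_nonneg (α := ℝ); linarith)
    _ = σ⁻¹ ^ D := by
        rw [← Real.rpow_natCast σ 2, ← Real.rpow_mul hσ.le, Nat.cast_ofNat,
          show (2 : ℝ) * (-(D : ℝ) / 2) = -D by ring, Real.rpow_neg hσ.le, Real.rpow_natCast,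
          inv_pow]

end Gaussian

lemma fwdDen_eq_kernelConv {D : ℕ} {p₀ : (Fin D → ℝ) → ℝ} (hsupp : ∀ y, y ∉ cube D → p₀ y = 0)
    (α : ℝ → ℝ) (t : ℝ) :
    fwdDen D α p₀ t = fun x => (2 * Real.pi * sigmaT α t ^ 2) ^ (-(D : ℝ) / 2) *
      kernelConv volume p₀ (fun s => gaussKernel ((sigmaT α t)⁻¹ * s)) (muT α t) 0 x := by
  funext x
  rw [fwdDen, kernelConv, ← integral_const_mul,
    setIntegral_eq_integral_of_forall_compl_eq_zero fun y hy => by rw [hsupp y hy, zero_mul]]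
  congr 1
  funext y
  rw [gaussD_eq]
  ring

lemma muT_lt_one {τlo τhi : ℝ} {α : ℝ → ℝ} (hτlo : 0 < τlo) (hα : Measurable α)
    (hα_bounds : ∀ t, 0 ≤ t → τlo ≤ α t ∧ α t ≤ τhi) {t : ℝ} (ht : 0 < t) :
    muT α t < 1 := by
  have h_int : IntegrableOn α (Set.Ioc 0 t) :=
    Measure.integrableOn_of_bounded (M := τhi) (by simp) hα.aestronglyMeasurable
      (ae_restrict_of_forall_mem measurableSet_Ioc fun s hs => by
        have := hα_bounds s hs.1.le
        rw [Real.norm_eq_abs, abs_of_pos (hτlo.trans_le this.1)]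
        exact this.2)
  have h_lower : τlo * t ≤ ∫ s in Set.Ioc 0 t, α s :=
    calc τlo * t = ∫ _ in Set.Ioc 0 t, τlo := by simp [ht.le, mul_comm]
      _ ≤ ∫ s in Set.Ioc 0 t, α s :=
        setIntegral_mono_on (integrableOn_const (by simp)) h_int measurableSet_Ioc
          fun s hs => (hα_bounds s hs.1.le).1
  rw [muT, Real.exp_lt_one_iff, neg_lt_zero]
  exact (mul_pos hτlo ht).trans_le h_lower

lemma muT_pos (α : ℝ → ℝ) (t : ℝ) : 0 < muT α t := Real.exp_pos _

lemma sigmaT_pos {α : ℝ → ℝ} {t : ℝ} (h : muT α t < 1) : 0 < sigmaT α t :=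
  Real.sqrt_pos.2 (by nlinarith [muT_pos α t])

lemma muT_sq_add_sigmaT_sq {α : ℝ → ℝ} {t : ℝ} (h : muT α t < 1) :
    muT α t ^ 2 + sigmaT α t ^ 2 = 1 := by
  rw [sigmaT, Real.sq_sqrt (by nlinarith [muT_pos α t])]
  ring

lemma mderivG_fwdDen {D : ℕ} {p₀ : (Fin D → ℝ) → ℝ} (hp₀_int : Integrable p₀)
    (hsupp : ∀ y, y ∉ cube D → p₀ y = 0) {α : ℝ → ℝ} {t : ℝ} (hσ : 0 < sigmaT α t)
    (k : Fin D → ℕ) :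
    mderivG D k (fwdDen D α p₀ t) = fun x => (2 * Real.pi * sigmaT α t ^ 2) ^ (-(D : ℝ) / 2) *
      kernelConv volume p₀ (fun s => gaussKernel ((sigmaT α t)⁻¹ * s)) (muT α t) k x := by
  have hbdd (n : ℕ) :
      ∃ C, ∀ s, |iteratedDeriv n (fun s => gaussKernel ((sigmaT α t)⁻¹ * s)) s| ≤ C := by
    obtain ⟨B, -, hB⟩ := exists_abs_iteratedDeriv_gaussKernel_le n
    exact ⟨_, abs_iteratedDeriv_comp_inv_mul_le contDiff_gaussKernel hσ hB⟩
  rw [fwdDen_eq_kernelConv hsupp, mderivG_const_mul,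
    mderivG_kernelConv (contDiff_gaussKernel_comp_mul _) hbdd hp₀_int]

lemma rpow_mul_abs_kernelConv_gaussKernel_le {D : ℕ} {σ μ K : ℝ} {B : ℕ → ℝ}
    (hσ : 0 < σ) (hμ : 0 < μ) (hμσ : μ ^ 2 + σ ^ 2 = 1)
    (hB : ∀ n v, |iteratedDeriv n gaussKernel v| ≤ B n) {p₀ : (Fin D → ℝ) → ℝ}
    (hp₀_nonneg : ∀ y, 0 ≤ p₀ y) (hp₀K : ∀ y, p₀ y ≤ K) (hp₀_int : ∫ y, p₀ y = 1)
    (k : Fin D → ℕ) (x : Fin D → ℝ) :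
    (2 * Real.pi * σ ^ 2) ^ (-(D : ℝ) / 2) *
        |kernelConv volume p₀ (fun s => gaussKernel (σ⁻¹ * s)) μ k x|
      ≤ 2 ^ D * (∏ j, B (k j) + K * ∏ j, ∫ v, |iteratedDeriv (k j) gaussKernel v|) /
        σ ^ (∑ j, k j) := by
  rw [div_eq_mul_inv (2 ^ D * _), ← inv_pow]
  set P := |kernelConv volume p₀ (fun s => gaussKernel (σ⁻¹ * s)) μ k x|
  set B' := ∏ j, B (k j)
  set J := ∏ j, ∫ v, |iteratedDeriv (k j) gaussKernel v|
  have hB' : 0 ≤ B' := Finset.prod_nonneg fun j _ => (abs_nonneg _).trans (hB (k j) 0)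
  have hJ : 0 ≤ J := Finset.prod_nonneg fun j _ => integral_nonneg fun _ => abs_nonneg _
  have hK : 0 ≤ K := (hp₀_nonneg 0).trans (hp₀K 0)
  have hΛ := two_pi_mul_sq_rpow_le D hσ
  have h_sup : P ≤ σ⁻¹ ^ (∑ j, k j) * B' := by
    have := abs_kernelConv_le_of_abs_le (c := μ) hp₀_nonneg
      (.of_integral_ne_zero (by rw [hp₀_int]; exact one_ne_zero))
      (abs_prodIteratedDeriv_gaussKernel_le hB hσ k) x
    rwa [hp₀_int, mul_one] at this
  have h_L1 : P ≤ K * (μ⁻¹ ^ D * (σ ^ D * σ⁻¹ ^ (∑ j, k j) * J)) := by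
    rw [← prod_integral_abs_iteratedDeriv_gaussKernel hσ]
    exact abs_kernelConv_volume_le (fun n => integrable_iteratedDeriv_comp_inv_mul
      contDiff_gaussKernel hσ n (integrable_iteratedDeriv_gaussKernel n))
      (fun y => (abs_of_nonneg (hp₀_nonneg y)).trans_le (hp₀K y)) hμ k x
  rcases le_total μ σ with h | h
  · have h_inv : σ⁻¹ ≤ 2 := inv_le_of_inv_le₀ two_pos (by nlinarith)
    calc _ ≤ σ⁻¹ ^ D * (σ⁻¹ ^ (∑ j, k j) * B') := mul_le_mul hΛ h_sup (abs_nonneg _) (by positivity)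
      _ = σ⁻¹ ^ D * B' * σ⁻¹ ^ (∑ j, k j) := by ring
      _ ≤ 2 ^ D * B' * σ⁻¹ ^ (∑ j, k j) := by gcongr
      _ ≤ _ := by gcongr; linarith [mul_nonneg hK hJ]
  · have h_inv : μ⁻¹ ≤ 2 := inv_le_of_inv_le₀ two_pos (by nlinarith)
    calc _ ≤ σ⁻¹ ^ D * (K * (μ⁻¹ ^ D * (σ ^ D * σ⁻¹ ^ (∑ j, k j) * J))) :=
          mul_le_mul hΛ h_L1 (abs_nonneg _) (by positivity)
      _ = μ⁻¹ ^ D * (K * J) * σ⁻¹ ^ (∑ j, k j) := by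
          rw [inv_pow σ]
          field_simp
      _ ≤ 2 ^ D * (K * J) * σ⁻¹ ^ (∑ j, k j) := by gcongr
      _ ≤ _ := by gcongr; linarith

theorem statement_18_general
    (D : ℕ) (K τlo τhi : ℝ)
    (hK : 0 < K) (hτlo : 0 < τlo) (k : Fin D → ℕ) :
    ∃ C : ℝ, 0 < C ∧
      ∀ (p₀ : (Fin D → ℝ) → ℝ) (α : ℝ → ℝ),
        ForwardHyp D τlo τhi α p₀ →
        (∀ x ∈ cube D, p₀ x ≤ K) →
        ∀ (x : Fin D → ℝ) (t : ℝ), 0 < t →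
          |mderivG D k (fwdDen D α p₀ t) x| ≤ C / sigmaT α t ^ (∑ i, k i) := by
  choose B hB_pos hB using exists_abs_iteratedDeriv_gaussKernel_le
  refine ⟨2 ^ D * (∏ j, B (k j) + K * ∏ j, ∫ v, |iteratedDeriv (k j) gaussKernel v|), ?_, ?_⟩
  · have hB' : 0 < ∏ j, B (k j) := Finset.prod_pos fun j _ => hB_pos (k j)
    have hJ : 0 ≤ ∏ j, ∫ v, |iteratedDeriv (k j) gaussKernel v| :=
      Finset.prod_nonneg fun j _ => integral_nonneg fun _ => abs_nonneg _
    positivity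
  rintro p₀ α ⟨-, hp₀_nonneg, hp₀_supp, hp₀_int, hα, hα_bounds⟩ hp₀K x t ht
  have hμ := muT_lt_one hτlo hα hα_bounds ht
  have hp₀K' (y : Fin D → ℝ) : p₀ y ≤ K := by
    by_cases hy : y ∈ cube D
    · exact hp₀K y hy
    · exact (hp₀_supp y hy).trans_le hK.le
  rw [mderivG_fwdDen (.of_integral_ne_zero (by rw [hp₀_int]; exact one_ne_zero)) hp₀_supp
    (sigmaT_pos hμ), abs_mul, abs_of_nonneg (by positivity)]
  exact rpow_mul_abs_kernelConv_gaussKernel_le (sigmaT_pos hμ) (muT_pos α t)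
    (muT_sq_add_sigmaT_sq hμ) hB hp₀_nonneg hp₀K' hp₀_int k x

/-- Lemma A.3 of the paper: bound `|D^k p_t(x)| ≤ C / σ_t^{|k|}`
on the mixed partial derivatives of the marginal density `p_t`. -/
theorem statement_18
    (D : ℕ) (hD : 0 < D) (K τlo τhi : ℝ)
    (hK : 0 < K) (hτlo : 0 < τlo) (hττ : τlo ≤ τhi) (k : Fin D → ℕ) :
    ∃ C : ℝ, 0 < C ∧
      ∀ (p₀ : (Fin D → ℝ) → ℝ) (α : ℝ → ℝ),
        ForwardHyp D τlo τhi α p₀ →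
        (∀ x ∈ cube D, p₀ x ≤ K) →
        ∀ (x : Fin D → ℝ) (t : ℝ), 0 < t →
          |mderivG D k (fwdDen D α p₀ t) x| ≤ C / sigmaT α t ^ (∑ i, k i) :=
  statement_18_general D K τlo τhi hK hτlo k

end DMpaper

end
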